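/- Subadditive single-agent scaling lemma: Let f be monotone subadditive on finite A partitioned into A_1,...,A_n, let D be a dropout-stable distribution with respect to α, fix an agent i and γ > 1, and define α' by α'_i = γα_i, α'_{i'} = 0 for i' ≠ i. Then there exists a pure Nash equilibrium S' with respect to α' satisfying f(S') ≥ (1 − 1/γ) E_{S∼D}[f(S_i)]. -/

import Mathlib

/-!
Dropout stability says that agent `i` gains nothing by withdrawing its own actions; together
with subadditivity `f S ≤ f S₋ᵢ + f Sᵢ` this bounds the expected cost of `Sᵢ` by
`αᵢ · E[f Sᵢ]`. Under `α'` only agent `i` is paid, so any set maximizing its utility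
`γ αᵢ f(T) − c(T)` over `T ⊆ Aᵢ` is a pure Nash equilibrium, and its utility is at least the
expected utility of `Sᵢ`, i.e. at least `γ αᵢ E[f Sᵢ] − αᵢ E[f Sᵢ]`; dividing by `γ αᵢ` gives
the bound. When `αᵢ = 0` the sets `Sᵢ` are almost surely cost-free, and breaking ties among
the maximizers in favour of larger `f` handles this case.
-/

open Finset

section WeightedSums

variable {ι : Type*} [Fintype ι] {D X : ι → ℝ}

theorem sum_mul_le_of_forall_ne_zero {b : ℝ} (hD : ∀ ω, 0 ≤ D ω) (hDsum : ∑ ω, D ω = 1)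
    (h : ∀ ω, D ω ≠ 0 → X ω ≤ b) : ∑ ω, D ω * X ω ≤ b :=
  calc ∑ ω, D ω * X ω ≤ ∑ ω, D ω * b := sum_le_sum fun ω _ => by
        by_cases hω : D ω = 0
        · simp [hω]
        · exact mul_le_mul_of_nonneg_left (h ω hω) (hD ω)
    _ = b := by rw [← sum_mul, hDsum, one_mul]

theorem eq_zero_of_sum_mul_nonpos (hD : ∀ ω, 0 ≤ D ω) (hX : ∀ ω, 0 ≤ X ω)
    (h : ∑ ω, D ω * X ω ≤ 0) {ω : ι} (hω : D ω ≠ 0) : X ω = 0 := by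
  have hterms : ∀ ω ∈ univ, 0 ≤ D ω * X ω := fun ω _ => mul_nonneg (hD ω) (hX ω)
  have hsum := le_antisymm h (sum_nonneg hterms)
  exact (mul_eq_zero.1 ((sum_eq_zero_iff_of_nonneg hterms).1 hsum ω (mem_univ ω))).resolve_left hω

end WeightedSums

theorem Finset.exists_max_image_lex {α β γ : Type*} [LinearOrder β] [LinearOrder γ]
    (s : Finset α) (hs : s.Nonempty) (u : α → β) (g : α → γ) :
    ∃ x ∈ s, (∀ y ∈ s, u y ≤ u x) ∧ ∀ y ∈ s, u y = u x → g y ≤ g x := by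
  obtain ⟨x, hx, hmax⟩ := s.exists_max_image (fun y => toLex (u y, g y)) hs
  refine ⟨x, hx, fun y hy => ?_, fun y hy hyx => ?_⟩
  · rcases Prod.Lex.toLex_le_toLex.1 (hmax y hy) with hlt | ⟨heq, -⟩
    exacts [hlt.le, heq.le]
  · rcases Prod.Lex.toLex_le_toLex.1 (hmax y hy) with hlt | ⟨-, hle⟩
    exacts [absurd hyx hlt.ne, hle]

section Game

variable {n : ℕ} {V : Type*} [Fintype V]

def IsPureNash [DecidableEq V] (ag : V → Fin n) (f : Finset V → ℝ) (c : V → ℝ)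
    (α' : Fin n → ℝ) (S' : Finset V) : Prop :=
  ∀ i' : Fin n, ∀ Ti ⊆ univ.filter (fun j => ag j = i'),
    α' i' * f ((S'.filter (fun j => ag j ≠ i')) ∪ (S'.filter (fun j => ag j = i')))
        - ∑ j ∈ S'.filter (fun j => ag j = i'), c j
      ≥ α' i' * f ((S'.filter (fun j => ag j ≠ i')) ∪ Ti) - ∑ j ∈ Ti, c j

theorem isPureNash_of_forall_le [DecidableEq V] {ag : V → Fin n} {f : Finset V → ℝ}
    {c : V → ℝ} {α' : Fin n → ℝ} {i : Fin n} {S' : Finset V} (hc : ∀ j, 0 ≤ c j)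
    (hα' : ∀ i', i' ≠ i → α' i' = 0) (hS' : S' ⊆ univ.filter (fun j => ag j = i))
    (hbest : ∀ T ⊆ univ.filter (fun j => ag j = i),
      α' i * f T - ∑ j ∈ T, c j ≤ α' i * f S' - ∑ j ∈ S', c j) :
    IsPureNash ag f c α' S' := by
  have hS'i : ∀ j ∈ S', ag j = i := fun j hj => (mem_filter.1 (hS' hj)).2
  intro i' Ti hTi
  by_cases hi' : i' = i
  · subst hi'
    rw [filter_false_of_mem fun j hj => not_not.2 (hS'i j hj), filter_true_of_mem hS'i,
      empty_union, empty_union]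
    exact hbest Ti hTi
  · rw [hα' i' hi', filter_false_of_mem fun j hj => (hS'i j hj).trans_ne (Ne.symm hi')]
    simpa using sum_nonneg fun j _ => hc j

section ExpectedValue

variable {ag : V → Fin n} {f : Finset V → ℝ} {c : V → ℝ} {D : Finset V → ℝ} {i : Fin n}

theorem expected_cost_le [DecidableEq V] {a : ℝ}
    (hsubadd : ∀ S T : Finset V, f (S ∪ T) ≤ f S + f T) (ha : 0 ≤ a) (hD : ∀ S, 0 ≤ D S)
    (hstable : ∑ S : Finset V, D S * (a * f S - ∑ j ∈ S.filter (fun j => ag j = i), c j)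
        ≥ ∑ S : Finset V, D S * (a * f (S.filter (fun j => ag j ≠ i)))) :
    ∑ S : Finset V, D S * ∑ j ∈ S.filter (fun j => ag j = i), c j
      ≤ a * ∑ S : Finset V, D S * f (S.filter (fun j => ag j = i)) := by
  have hsplit : ∀ S : Finset V,
      f S ≤ f (S.filter (fun j => ag j ≠ i)) + f (S.filter (fun j => ag j = i)) := fun S => by
    simpa only [union_comm, filter_union_filter_not_eq] using hsubadd
      (S.filter (fun j => ag j ≠ i)) (S.filter (fun j => ag j = i))
  have hle : ∑ S : Finset V, D S * (a * f S - ∑ j ∈ S.filter (fun j => ag j = i), c j)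
      ≤ ∑ S : Finset V, D S * (a * f (S.filter (fun j => ag j ≠ i))
        + a * f (S.filter (fun j => ag j = i)) - ∑ j ∈ S.filter (fun j => ag j = i), c j) :=
    sum_le_sum fun S _ => mul_le_mul_of_nonneg_left
      (by nlinarith [mul_le_mul_of_nonneg_left (hsplit S) ha]) (hD S)
  simp only [mul_sub, mul_add, sum_sub_distrib, sum_add_distrib, mul_sum] at hle hstable ⊢
  simp only [mul_left_comm a] at hle hstable ⊢
  linarith

variable {S' : Finset V}

theorem one_sub_one_div_mul_expected_le_of_pos {γ a : ℝ} (hD : ∀ S, 0 ≤ D S)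
    (hDsum : ∑ S : Finset V, D S = 1) (hc : ∀ j, 0 ≤ c j) (hγ : 0 < γ) (ha : 0 < a)
    (hcost : ∑ S : Finset V, D S * ∑ j ∈ S.filter (fun j => ag j = i), c j
      ≤ a * ∑ S : Finset V, D S * f (S.filter (fun j => ag j = i)))
    (hbest : ∀ T ⊆ univ.filter (fun j => ag j = i),
      γ * a * f T - ∑ j ∈ T, c j ≤ γ * a * f S' - ∑ j ∈ S', c j) :
    (1 - 1 / γ) * ∑ S : Finset V, D S * f (S.filter (fun j => ag j = i)) ≤ f S' := by
  set E := ∑ S : Finset V, D S * f (S.filter (fun j => ag j = i))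
  have hmean := sum_mul_le_of_forall_ne_zero hD hDsum
    (X := fun S => γ * a * f (S.filter (fun j => ag j = i))
      - ∑ j ∈ S.filter (fun j => ag j = i), c j)
    fun S _ => hbest _ (filter_subset_filter _ (subset_univ S))
  have hexp : ∑ S : Finset V, D S * (γ * a * f (S.filter (fun j => ag j = i))
      - ∑ j ∈ S.filter (fun j => ag j = i), c j)
      = γ * a * E - ∑ S : Finset V, D S * ∑ j ∈ S.filter (fun j => ag j = i), c j := by
    rw [mul_sum, ← sum_sub_distrib]
    exact sum_congr rfl fun S _ => by ring
  have hkey : (γ - 1) * a * E ≤ γ * a * f S' := by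
    nlinarith [sum_nonneg fun j (_ : j ∈ S') => hc j]
  have hscale : γ * a * ((1 - 1 / γ) * E) = (γ - 1) * a * E := by
    field_simp
  exact le_of_mul_le_mul_left (hscale ▸ hkey) (mul_pos hγ ha)

theorem expected_le_of_costFree (hD : ∀ S, 0 ≤ D S) (hDsum : ∑ S : Finset V, D S = 1)
    (hc : ∀ j, 0 ≤ c j)
    (hcost : ∑ S : Finset V, D S * ∑ j ∈ S.filter (fun j => ag j = i), c j ≤ 0)
    (hS' : ∀ T ⊆ univ.filter (fun j => ag j = i), ∑ j ∈ T, c j = 0 → f T ≤ f S') :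
    ∑ S : Finset V, D S * f (S.filter (fun j => ag j = i)) ≤ f S' :=
  sum_mul_le_of_forall_ne_zero hD hDsum fun S hS =>
    hS' _ (filter_subset_filter _ (subset_univ S))
      (eq_zero_of_sum_mul_nonpos hD (fun _ => sum_nonneg fun j _ => hc j) hcost hS)

theorem one_sub_one_div_mul_expected_le {γ a : ℝ} (hD : ∀ S, 0 ≤ D S)
    (hDsum : ∑ S : Finset V, D S = 1) (hnn : ∀ S, 0 ≤ f S) (hc : ∀ j, 0 ≤ c j) (hγ : 1 < γ)
    (ha : 0 ≤ a)
    (hcost : ∑ S : Finset V, D S * ∑ j ∈ S.filter (fun j => ag j = i), c j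
      ≤ a * ∑ S : Finset V, D S * f (S.filter (fun j => ag j = i)))
    (hbest : ∀ T ⊆ univ.filter (fun j => ag j = i),
      γ * a * f T - ∑ j ∈ T, c j ≤ γ * a * f S' - ∑ j ∈ S', c j)
    (htie : ∀ T ⊆ univ.filter (fun j => ag j = i),
      γ * a * f T - ∑ j ∈ T, c j = γ * a * f S' - ∑ j ∈ S', c j → f T ≤ f S') :
    (1 - 1 / γ) * ∑ S : Finset V, D S * f (S.filter (fun j => ag j = i)) ≤ f S' := by
  rcases ha.eq_or_lt with rfl | ha
  · have hcS' : ∑ j ∈ S', c j = 0 :=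
      le_antisymm (by simpa using hbest ∅ (empty_subset _)) (sum_nonneg fun j _ => hc j)
    have hE : ∑ S : Finset V, D S * f (S.filter (fun j => ag j = i)) ≤ f S' :=
      expected_le_of_costFree hD hDsum hc (by simpa using hcost)
        fun T hT hcT => htie T hT (by simp [hcT, hcS'])
    have hE0 : 0 ≤ ∑ S : Finset V, D S * f (S.filter (fun j => ag j = i)) :=
      sum_nonneg fun S _ => mul_nonneg (hD S) (hnn _)
    have hγinv : 0 ≤ 1 / γ := by positivity
    nlinarith
  · exact one_sub_one_div_mul_expected_le_of_pos hD hDsum hc (by linarith) ha hcost hbest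

end ExpectedValue

end Game

theorem subadditive_single_agent_scaling_general (n : ℕ) (V : Type*) [Fintype V] [DecidableEq V]
    (ag : V → Fin n) (f : Finset V → ℝ)
    (hnn : ∀ S : Finset V, 0 ≤ f S)
    (hsubadd : ∀ S T : Finset V, f (S ∪ T) ≤ f S + f T)
    (c : V → ℝ) (hc : ∀ j, 0 ≤ c j)
    (α : Fin n → ℝ) (hα : ∀ i', 0 ≤ α i' ∧ α i' ≤ 1)
    (D : Finset V → ℝ) (hD : ∀ S, 0 ≤ D S) (hDsum : ∑ S : Finset V, D S = 1)
    (hstable : ∀ i' : Fin n,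
      ∑ S : Finset V, D S * (α i' * f S - ∑ j ∈ S.filter (fun j => ag j = i'), c j)
        ≥ ∑ S : Finset V, D S * (α i' * f (S.filter (fun j => ag j ≠ i'))))
    (i : Fin n) (γ : ℝ) (hγ : 1 < γ)
    (α' : Fin n → ℝ) (hα' : ∀ i', α' i' = if i' = i then γ * α i else 0) :
    ∃ S' : Finset V,
      (∀ i' : Fin n, ∀ Ti ⊆ univ.filter (fun j => ag j = i'),
        α' i' * f ((S'.filter (fun j => ag j ≠ i')) ∪ (S'.filter (fun j => ag j = i')))
            - ∑ j ∈ S'.filter (fun j => ag j = i'), c j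
          ≥ α' i' * f ((S'.filter (fun j => ag j ≠ i')) ∪ Ti) - ∑ j ∈ Ti, c j)
      ∧ f S' ≥ (1 - 1/γ) * ∑ S : Finset V, D S * f (S.filter (fun j => ag j = i)) := by
  have hα'i : α' i = γ * α i := by simp [hα']
  obtain ⟨S', hS'A, hbest, htie⟩ := (univ.filter (fun j => ag j = i)).powerset.exists_max_image_lex
    ⟨∅, empty_mem_powerset _⟩ (fun T => γ * α i * f T - ∑ j ∈ T, c j) f
  simp only [mem_powerset] at hS'A hbest htie
  refine ⟨S', isPureNash_of_forall_le hc (fun i' h => by simp [hα', h]) hS'A (by rwa [hα'i]), ?_⟩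
  exact one_sub_one_div_mul_expected_le hD hDsum hnn hc hγ (hα i).1
    (expected_cost_le hsubadd (hα i).1 hD (hstable i)) hbest htie

/-- Subadditive single-agent scaling lemma: For monotone subadditive `f`,
a dropout-stable distribution `D` w.r.t. `α`, an agent `i` and `γ > 1`, the contract `α'`
with `α'_i = γ α_i` and `α'_{i'} = 0` for `i' ≠ i` admits a pure Nash equilibrium `S'`
with `f(S') ≥ (1 − 1/γ) E_{S∼D}[f(S_i)]`. -/
theorem subadditive_single_agent_scaling (n : ℕ) (V : Type*) [Fintype V] [DecidableEq V]
    (ag : V → Fin n) (f : Finset V → ℝ)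
    (hf0 : f ∅ = 0)
    (hnn : ∀ S : Finset V, 0 ≤ f S)
    (hmono : ∀ S T : Finset V, S ⊆ T → f S ≤ f T)
    (hsubadd : ∀ S T : Finset V, f (S ∪ T) ≤ f S + f T)
    (c : V → ℝ) (hc : ∀ j, 0 ≤ c j)
    (α : Fin n → ℝ) (hα : ∀ i', 0 ≤ α i' ∧ α i' ≤ 1)
    (D : Finset V → ℝ) (hD : ∀ S, 0 ≤ D S) (hDsum : ∑ S : Finset V, D S = 1)
    (hstable : ∀ i' : Fin n,
      ∑ S : Finset V, D S * (α i' * f S - ∑ j ∈ S.filter (fun j => ag j = i'), c j)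
        ≥ ∑ S : Finset V, D S * (α i' * f (S.filter (fun j => ag j ≠ i'))))
    (i : Fin n) (γ : ℝ) (hγ : 1 < γ)
    (α' : Fin n → ℝ) (hα' : ∀ i', α' i' = if i' = i then γ * α i else 0) :
    ∃ S' : Finset V,
      (∀ i' : Fin n, ∀ Ti ⊆ univ.filter (fun j => ag j = i'),
        α' i' * f ((S'.filter (fun j => ag j ≠ i')) ∪ (S'.filter (fun j => ag j = i')))
            - ∑ j ∈ S'.filter (fun j => ag j = i'), c j
          ≥ α' i' * f ((S'.filter (fun j => ag j ≠ i')) ∪ Ti) - ∑ j ∈ Ti, c j)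
      ∧ f S' ≥ (1 - 1/γ) * ∑ S : Finset V, D S * f (S.filter (fun j => ag j = i)) :=
  subadditive_single_agent_scaling_general n V ag f hnn hsubadd c hc α hα D hD hDsum hstable i γ hγ
    α' hα'
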